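/- Let α and β be nonnegative integers. Then c_{2α+2β+6}(α,β,x) = −[(α+β+2)/((α+1)(β+1))] (x²−1)^{α+β+3} / ((α+β+1)! (α+β+3)!) for all real x. -/

import Mathlib

/-- The Pochhammer symbol (rising factorial) `(a)_k = a (a+1) ⋯ (a+k-1)`. -/
noncomputable def poch (a : ℝ) (k : ℕ) : ℝ := (ascPochhammer ℝ k).eval a

/-- The first part `c_i^{(1)}(α,β,x)` of the coefficient `c_i(α,β,x)`. -/
noncomputable def cCoef1 (α β : ℝ) (i : ℕ) (x : ℝ) : ℝ :=
  -((α + β + 2) ^ 2 * (α + β + 3) * (α + β + 4) / ((α + 1) * (β + 1) * (i : ℝ))) *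
    (x ^ 2 - 1) * (2 : ℝ) ^ (i - 2) *
    ∑ ℓ ∈ Finset.range (i - 1),
      (-1 : ℝ) ^ ℓ *
      (poch (β + 3) (i - ℓ - 2) * poch (-α - β - 3) (i - ℓ - 2) /
        (Nat.factorial (i - ℓ - 1) * Nat.factorial (i - ℓ - 2) * Nat.factorial ℓ *
          Nat.factorial (i - ℓ - 1))) *
      (∑ m ∈ Finset.range (ℓ + 1),
        poch (-(ℓ : ℝ)) m * poch (α + β + 5) m * poch (α + β + 4) m *
          poch (β + (i : ℝ) - (ℓ : ℝ) + 1) m /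
          (poch (β + 3) m * poch ((i : ℝ) - (ℓ : ℝ)) m * poch ((i : ℝ) - (ℓ : ℝ)) m *
            Nat.factorial m)) *
      ((x + 1) / 2) ^ (ℓ + 1)

/-- The second part `c_i^{(2)}(α,β,x)` of the coefficient `c_i(α,β,x)`. -/
noncomputable def cCoef2 (α β : ℝ) (i : ℕ) (x : ℝ) : ℝ :=
  ((α + β + 2) ^ 2 * (α + β + 3) * (α + β + 4) / ((α + 1) * (β + 1) * (i : ℝ))) *
    (x ^ 2 - 1) * (-2 : ℝ) ^ (i - 2) *
    ∑ ℓ ∈ Finset.range (i - 1),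
      (poch (α + 3) (i - ℓ - 2) * poch (-α - β - 3) (i - ℓ - 2) /
        (Nat.factorial (i - ℓ - 1) * Nat.factorial (i - ℓ - 2) * Nat.factorial ℓ *
          Nat.factorial (i - ℓ - 1))) *
      (∑ m ∈ Finset.range (ℓ + 1),
        poch (-(ℓ : ℝ)) m * poch (α + β + 5) m * poch (α + β + 4) m *
          poch (α + (i : ℝ) - (ℓ : ℝ) + 1) m /
          (poch (α + 3) m * poch ((i : ℝ) - (ℓ : ℝ)) m * poch ((i : ℝ) - (ℓ : ℝ)) m *
            Nat.factorial m)) *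
      ((x - 1) / 2) ^ (ℓ + 1)

/-- The coefficient `c_i(α,β,x) = c_i^{(1)}(α,β,x) + c_i^{(2)}(α,β,x)`. -/
noncomputable def cCoef (α β : ℝ) (i : ℕ) (x : ℝ) : ℝ := cCoef1 α β i x + cCoef2 α β i x



open Polynomial Finset Nat

lemma poch_nat (c k : ℕ) : poch ((c : ℝ) + 1) k = (c + k)! / c ! := by
  have h := factorial_mul_ascPochhammer ℝ c k
  have hc : (c ! : ℝ) ≠ 0 := by positivity
  rw [poch, eq_div_iff hc]
  rw [mul_comm]
  exact_mod_cast h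

lemma poch_neg_zero {c k : ℕ} (h : c < k) : poch (-(c : ℝ)) k = 0 :=
  ascPochhammer_eval_neg_coe_nat_of_lt h

lemma poch_neg {c k : ℕ} (h : k ≤ c) :
    poch (-(c : ℝ)) k = (-1) ^ k * c ! / (c - k)! := by
  have h1 := ascPochhammer_eval_neg_eq_descPochhammer (R := ℝ) (c : ℝ) k
  have h2 := descPochhammer_eval_eq_descFactorial (R := ℝ) c k
  have h3 := Nat.factorial_mul_descFactorial h
  have hck : ((c - k)! : ℝ) ≠ 0 := by positivity
  rw [poch, h1, h2, eq_div_iff hck, mul_assoc]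
  congr 1
  rw [mul_comm]
  exact_mod_cast congrArg (Nat.cast : ℕ → ℝ) h3

/-- Abel-type rearrangement of alternating binomial sums. -/
lemma abel_step (ℓ : ℕ) (f : ℕ → ℝ) :
    ∑ m ∈ range (ℓ + 2), (-1 : ℝ) ^ m * ((ℓ+1).choose m) * f m
      = ∑ m ∈ range (ℓ + 1), (-1 : ℝ) ^ m * (ℓ.choose m) * (f m - f (m + 1)) := by
  have h1 : ∑ m ∈ range (ℓ + 2), (-1 : ℝ) ^ m * ((ℓ+1).choose m) * f m
      = (∑ k ∈ range (ℓ + 1), (-1 : ℝ) ^ (k+1) * ((ℓ+1).choose (k+1)) * f (k+1))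
        + (-1 : ℝ) ^ 0 * ((ℓ+1).choose 0) * f 0 := by
    exact Finset.sum_range_succ' _ (ℓ+1)
  rw [h1]
  have h2 : ∀ k, ((ℓ+1).choose (k+1) : ℝ) = (ℓ.choose k : ℝ) + (ℓ.choose (k+1) : ℝ) := by
    intro k; exact_mod_cast congrArg (Nat.cast : ℕ → ℝ) (Nat.choose_succ_succ ℓ k)
  have h3 : ∑ k ∈ range (ℓ + 1), (-1 : ℝ) ^ (k+1) * ((ℓ+1).choose (k+1)) * f (k+1)
      = (∑ k ∈ range (ℓ + 1), -((-1 : ℝ) ^ k * (ℓ.choose k) * f (k+1)))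
        + ∑ k ∈ range (ℓ + 1), (-1 : ℝ) ^ (k+1) * (ℓ.choose (k+1)) * f (k+1) := by
    rw [← Finset.sum_add_distrib]
    apply Finset.sum_congr rfl
    intro k _
    rw [h2 k]; ring
  rw [h3]
  have h4 : ∑ k ∈ range (ℓ + 1), (-1 : ℝ) ^ (k+1) * (ℓ.choose (k+1)) * f (k+1)
      = ∑ m ∈ range (ℓ + 2), (-1 : ℝ) ^ m * (ℓ.choose m) * f m
        - (-1 : ℝ) ^ 0 * (ℓ.choose 0) * f 0 := by
    rw [Finset.sum_range_succ' (fun m => (-1 : ℝ) ^ m * (ℓ.choose m) * f m) (ℓ+1)]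
    ring
  rw [h4]
  have h5 : ∑ m ∈ range (ℓ + 2), (-1 : ℝ) ^ m * (ℓ.choose m) * f m
      = ∑ m ∈ range (ℓ + 1), (-1 : ℝ) ^ m * (ℓ.choose m) * f m := by
    rw [Finset.sum_range_succ]
    simp [Nat.choose_succ_self]
  rw [h5]
  have h6 : ∑ m ∈ range (ℓ + 1), (-1 : ℝ) ^ m * (ℓ.choose m) * (f m - f (m + 1))
      = ∑ m ∈ range (ℓ + 1), ((-1 : ℝ) ^ m * (ℓ.choose m) * f m
          + -((-1 : ℝ) ^ m * (ℓ.choose m) * f (m+1))) := by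
    apply Finset.sum_congr rfl; intro k _; ring
  rw [h6, Finset.sum_add_distrib]
  simp
  ring

/-- Coefficients of `p.comp (X + 1)`. -/
lemma comp_coeff (p : ℝ[X]) (k : ℕ) (hp : p.natDegree ≤ k + 2) :
    (p.comp (X + C 1)).coeff k
      = p.coeff k + ((k+1).choose k) * p.coeff (k+1) + ((k+2).choose k) * p.coeff (k+2) := by
  rw [← Polynomial.taylor_apply, Polynomial.taylor_coeff]
  have hd : (Polynomial.hasseDeriv k p).natDegree < 3 := by
    have := Polynomial.natDegree_hasseDeriv_le p k
    omega
  rw [Polynomial.eval_eq_sum_range' hd]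
  rw [Finset.sum_range_succ, Finset.sum_range_succ, Finset.sum_range_succ, Finset.sum_range_zero]
  simp only [Polynomial.hasseDeriv_coeff, one_pow, mul_one, zero_add]
  rw [Nat.choose_self]
  push_cast
  ring

/-- Key lemma: alternating binomial sum of polynomial values. -/
lemma keyA : ∀ (ℓ : ℕ) (p : ℝ[X]), p.natDegree ≤ ℓ + 1 →
    ∑ m ∈ range (ℓ + 1), (-1 : ℝ) ^ m * (ℓ.choose m) * p.eval (m : ℝ)
      = (-1) ^ ℓ * ℓ ! * (p.coeff ℓ + (ℓ * (ℓ + 1) / 2 : ℝ) * p.coeff (ℓ + 1)) := by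
  intro ℓ
  induction ℓ with
  | zero =>
    intro p hp
    have he : p.eval 0 = p.coeff 0 := (Polynomial.coeff_zero_eq_eval_zero p).symm
    simp [he]
  | succ ℓ ih =>
    intro p hp
    have key := abel_step ℓ (fun m => p.eval (m : ℝ))
    have hq : (p - p.comp (X + C 1)).natDegree ≤ ℓ + 1 := by
      apply Polynomial.natDegree_le_iff_coeff_eq_zero.mpr
      intro k hk
      rw [Polynomial.coeff_sub, comp_coeff p k (le_trans hp (by omega))]
      have hz1 : p.coeff (k+1) = 0 := Polynomial.coeff_eq_zero_of_natDegree_lt (by omega)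
      have hz2 : p.coeff (k+2) = 0 := Polynomial.coeff_eq_zero_of_natDegree_lt (by omega)
      rw [hz1, hz2]; ring
    have heval : ∀ m : ℕ, p.eval (m:ℝ) - p.eval ((m:ℝ)+1) = (p - p.comp (X + C 1)).eval (m:ℝ) := by
      intro m; simp [Polynomial.eval_comp]
    have key2 : ∑ m ∈ range (ℓ + 2), (-1 : ℝ) ^ m * ((ℓ+1).choose m) * p.eval (m : ℝ)
        = ∑ m ∈ range (ℓ + 1), (-1 : ℝ) ^ m * (ℓ.choose m) * (p - p.comp (X + C 1)).eval (m:ℝ) := by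
      rw [key]
      apply Finset.sum_congr rfl
      intro m _
      rw [← heval m]
      push_cast
      ring
    rw [key2, ih _ hq]
    have hc1 : (p - p.comp (X + C 1)).coeff ℓ
        = -((ℓ+1) : ℝ) * p.coeff (ℓ+1) - ((ℓ+2).choose ℓ) * p.coeff (ℓ+2) := by
      rw [Polynomial.coeff_sub, comp_coeff p ℓ (le_trans hp (by omega))]
      rw [Nat.choose_succ_self_right]
      push_cast; ring
    have hc2 : (p - p.comp (X + C 1)).coeff (ℓ+1) = -((ℓ+2) : ℝ) * p.coeff (ℓ+2) := by
      rw [Polynomial.coeff_sub, comp_coeff p (ℓ+1) (le_trans hp (by omega))]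
      have hz : p.coeff (ℓ+3) = 0 := Polynomial.coeff_eq_zero_of_natDegree_lt (by omega)
      rw [Nat.choose_succ_self_right, hz]
      push_cast; ring
    rw [hc1, hc2]
    have hch : ((ℓ+2).choose ℓ : ℝ) = (ℓ+2)*(ℓ+1)/2 := by
      have h2 : (ℓ+2).choose ℓ = (ℓ+2).choose 2 := by
        rw [← Nat.choose_symm (show ℓ ≤ ℓ+2 by omega)]
        congr 1; omega
      rw [h2, Nat.cast_choose_two]
      push_cast; ring
    rw [hch, Nat.factorial_succ]
    push_cast
    ring

noncomputable def pochPoly (c : ℝ) (k : ℕ) : ℝ[X] := (ascPochhammer ℝ k).comp (X + C c)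

lemma pochPoly_monic (c : ℝ) (k : ℕ) : (pochPoly c k).Monic :=
  (monic_ascPochhammer ℝ k).comp_X_add_C c

lemma pochPoly_natDegree (c : ℝ) (k : ℕ) : (pochPoly c k).natDegree = k := by
  rw [pochPoly, Polynomial.natDegree_comp, ascPochhammer_natDegree, natDegree_X_add_C, mul_one]

lemma pochPoly_eval (c t : ℝ) (k : ℕ) : (pochPoly c k).eval t = poch (t + c) k := by
  rw [pochPoly, Polynomial.eval_comp]
  simp [poch]

lemma pochPoly_nextCoeff (c : ℝ) (k : ℕ) :
    (pochPoly c k).nextCoeff = k * c + k * (k - 1) / 2 := by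
  induction k with
  | zero =>
    simp [pochPoly, ascPochhammer_zero, Polynomial.one_comp]
    exact Polynomial.nextCoeff_C_eq_zero 1
  | succ k ih =>
    have hs : pochPoly c (k+1) = pochPoly c k * (X + C ((k : ℝ) + c)) := by
      rw [pochPoly, pochPoly, ascPochhammer_succ_right, Polynomial.mul_comp]
      congr 1
      simp [Polynomial.add_comp]
      ring
    rw [hs, Polynomial.Monic.nextCoeff_mul (pochPoly_monic c k) (monic_X_add_C _), ih,
      Polynomial.nextCoeff_X_add_C]
    push_cast
    ring

/-- Evaluation of the inner alternating sum against a product of three Pochhammer factors. -/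
lemma innerEval (ℓ k1 k2 k3 : ℕ) (c1 c2 c3 : ℝ) (hdeg : k1 + k2 + k3 = ℓ + 1) :
    ∑ m ∈ range (ℓ + 1), (-1 : ℝ) ^ m * (ℓ.choose m) *
        (poch ((m : ℝ) + c1) k1 * poch ((m : ℝ) + c2) k2 * poch ((m : ℝ) + c3) k3)
      = (-1) ^ ℓ * ℓ ! *
        ((k1 * c1 + k1 * (k1 - 1) / 2) + (k2 * c2 + k2 * (k2 - 1) / 2)
          + (k3 * c3 + k3 * (k3 - 1) / 2) + ℓ * (ℓ + 1) / 2) := by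
  set p : ℝ[X] := pochPoly c1 k1 * pochPoly c2 k2 * pochPoly c3 k3 with hp
  have hmon : p.Monic := ((pochPoly_monic c1 k1).mul (pochPoly_monic c2 k2)).mul (pochPoly_monic c3 k3)
  have hdeg' : p.natDegree = ℓ + 1 := by
    rw [hp, Polynomial.natDegree_mul (by exact ((pochPoly_monic c1 k1).mul (pochPoly_monic c2 k2)).ne_zero)
      (pochPoly_monic c3 k3).ne_zero,
      Polynomial.natDegree_mul (pochPoly_monic c1 k1).ne_zero (pochPoly_monic c2 k2).ne_zero]
    rw [pochPoly_natDegree, pochPoly_natDegree, pochPoly_natDegree]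
    omega
  have hsum := keyA ℓ p (le_of_eq hdeg')
  have heval : ∀ m : ℕ, p.eval (m : ℝ)
      = poch ((m : ℝ) + c1) k1 * poch ((m : ℝ) + c2) k2 * poch ((m : ℝ) + c3) k3 := by
    intro m
    rw [hp]
    simp [Polynomial.eval_mul, pochPoly_eval]
  have hcoefftop : p.coeff (ℓ + 1) = 1 := by
    have := hmon.coeff_natDegree
    rwa [hdeg'] at this
  have hnext : p.coeff ℓ = (k1 * c1 + k1 * (k1 - 1) / 2) + (k2 * c2 + k2 * (k2 - 1) / 2)
      + (k3 * c3 + k3 * (k3 - 1) / 2) := by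
    have h1 : p.nextCoeff = (pochPoly c1 k1).nextCoeff + (pochPoly c2 k2).nextCoeff
        + (pochPoly c3 k3).nextCoeff := by
      rw [hp, Polynomial.Monic.nextCoeff_mul ((pochPoly_monic c1 k1).mul (pochPoly_monic c2 k2))
        (pochPoly_monic c3 k3),
        Polynomial.Monic.nextCoeff_mul (pochPoly_monic c1 k1) (pochPoly_monic c2 k2)]
    have h2 : p.nextCoeff = p.coeff ℓ := by
      rw [Polynomial.nextCoeff, hdeg']
      simp
    rw [← h2, h1, pochPoly_nextCoeff, pochPoly_nextCoeff, pochPoly_nextCoeff]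
  calc ∑ m ∈ range (ℓ + 1), (-1 : ℝ) ^ m * (ℓ.choose m) *
        (poch ((m : ℝ) + c1) k1 * poch ((m : ℝ) + c2) k2 * poch ((m : ℝ) + c3) k3)
      = ∑ m ∈ range (ℓ + 1), (-1 : ℝ) ^ m * (ℓ.choose m) * p.eval (m : ℝ) := by
        apply Finset.sum_congr rfl; intro m _; rw [heval m]
    _ = (-1) ^ ℓ * ℓ ! * (p.coeff ℓ + (ℓ * (ℓ + 1) / 2 : ℝ) * p.coeff (ℓ + 1)) := hsum
    _ = _ := by rw [hcoefftop, hnext]; ring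

lemma binom1 (n : ℕ) (y : ℝ) :
    ∑ s ∈ range (n + 1), (-1 : ℝ) ^ (n - s) * y ^ s / (s ! * (n - s)!)
      = (y - 1) ^ n / n ! := by
  have h := add_pow y (-1 : ℝ) n
  have h2 : (y - 1) ^ n = ∑ k ∈ range (n + 1), y ^ k * (-1 : ℝ) ^ (n - k) * (n.choose k) := by
    rw [sub_eq_add_neg, h]
  rw [h2, Finset.sum_div]
  apply Finset.sum_congr rfl
  intro k hk
  have hkn : k ≤ n := Nat.lt_succ_iff.mp (Finset.mem_range.mp hk)
  rw [Nat.cast_choose ℝ hkn]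
  have h1 : (k ! : ℝ) ≠ 0 := by positivity
  have h3 : ((n - k)! : ℝ) ≠ 0 := by positivity
  have h4 : (n ! : ℝ) ≠ 0 := by positivity
  field_simp
lemma binom2 (n : ℕ) (y : ℝ) :
    ∑ s ∈ range (n + 2), (-1 : ℝ) ^ (n + 1 - s) * s * y ^ s / (s ! * (n + 1 - s)!)
      = y * (y - 1) ^ n / n ! := by
  rw [Finset.sum_range_succ' (fun s => (-1 : ℝ) ^ (n + 1 - s) * s * y ^ s / (s ! * (n + 1 - s)!)) (n+1)]
  simp only [Nat.cast_zero, mul_zero, zero_mul, pow_zero, zero_div, add_zero, Nat.cast_succ]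
  have : ∀ t, (-1 : ℝ) ^ (n + 1 - (t+1)) * (t+1) * y ^ (t+1) / ((t+1)! * (n + 1 - (t+1))!)
      = y * ((-1 : ℝ) ^ (n - t) * y ^ t / (t ! * (n - t)!)) := by
    intro t
    have hsub : n + 1 - (t+1) = n - t := by omega
    rw [hsub, Nat.factorial_succ]
    have h1 : (t ! : ℝ) ≠ 0 := by positivity
    have h3 : ((n - t)! : ℝ) ≠ 0 := by positivity
    push_cast
    field_simp
    ring
  rw [Finset.sum_congr rfl (fun t _ => this t), ← Finset.mul_sum, binom1 n y]
  ring

/-- Rewriting of a single inner-sum term. -/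
lemma termEq (a b s u m v : ℕ) (h : a + b + 3 = s + u) (hmv : a + b + 1 + s = m + v) :
    poch (-((a+b+1+s : ℕ) : ℝ)) m * poch (((a+b+4 : ℕ) : ℝ) + 1) m *
        poch (((a+b+3 : ℕ) : ℝ) + 1) m * poch (((b+u+2 : ℕ) : ℝ) + 1) m /
      (poch (((b+2 : ℕ) : ℝ) + 1) m * poch (((u+1 : ℕ) : ℝ) + 1) m *
        poch (((u+1 : ℕ) : ℝ) + 1) m * m !)
    = (-1 : ℝ) ^ m * ((a+b+1+s).choose m) *
      ((b+2)! * ((u+1)! * (u+1)!) / ((a+b+4)! * ((a+b+3)! * (b+u+2)!))) *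
      (poch ((m : ℝ) + ((b:ℝ)+3)) (a+1) * poch ((m : ℝ) + ((u:ℝ)+2)) s *
        poch ((m : ℝ) + ((u:ℝ)+2)) (b+1)) := by
  have hm : m ≤ a + b + 1 + s := by omega
  have hv : a + b + 1 + s - m = v := by omega
  -- LHS poch rewrites
  rw [poch_neg hm, hv]
  rw [poch_nat (a+b+4) m, poch_nat (a+b+3) m, poch_nat (b+u+2) m, poch_nat (b+2) m,
    poch_nat (u+1) m]
  -- RHS poch rewrites
  have r1 : poch ((m : ℝ) + ((b:ℝ)+3)) (a+1) = ((a+b+3+m)! : ℝ) / ((m+b+2)! : ℝ) := by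
    have : ((m : ℝ) + ((b:ℝ)+3)) = ((m+b+2 : ℕ) : ℝ) + 1 := by push_cast; ring
    rw [this, poch_nat]
    have harg : m+b+2+(a+1) = a+b+3+m := by omega
    rw [harg]
  have r2 : poch ((m : ℝ) + ((u:ℝ)+2)) s = ((a+b+4+m)! : ℝ) / ((m+u+1)! : ℝ) := by
    have : ((m : ℝ) + ((u:ℝ)+2)) = ((m+u+1 : ℕ) : ℝ) + 1 := by push_cast; ring
    rw [this, poch_nat]
    have harg : m+u+1+s = a+b+4+m := by omega
    rw [harg]
  have r3 : poch ((m : ℝ) + ((u:ℝ)+2)) (b+1) = ((b+u+2+m)! : ℝ) / ((m+u+1)! : ℝ) := by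
    have : ((m : ℝ) + ((u:ℝ)+2)) = ((m+u+1 : ℕ) : ℝ) + 1 := by push_cast; ring
    rw [this, poch_nat]
    have harg : m+u+1+(b+1) = b+u+2+m := by omega
    rw [harg]
  rw [r1, r2, r3, Nat.cast_choose ℝ hm, hv]
  have d1 : m+b+2 = b+2+m := by omega
  have d2 : m+u+1 = u+1+m := by omega
  have c1 : ((m+b+2)! : ℝ) = ((b+2+m)! : ℝ) := by rw [d1]
  have c2 : ((m+u+1)! : ℝ) = ((u+1+m)! : ℝ) := by rw [d2]
  rw [c1, c2]
  have n1 : ((a+b+1+s)! : ℝ) ≠ 0 := by positivity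
  have n2 : ((a+b+4)! : ℝ) ≠ 0 := by positivity
  have n3 : ((a+b+3)! : ℝ) ≠ 0 := by positivity
  have n4 : ((b+u+2)! : ℝ) ≠ 0 := by positivity
  have n5 : ((b+2)! : ℝ) ≠ 0 := by positivity
  have n6 : ((u+1)! : ℝ) ≠ 0 := by positivity
  have n7 : (m ! : ℝ) ≠ 0 := by positivity
  have n8 : (v ! : ℝ) ≠ 0 := by positivity
  have n9 : ((a+b+4+m)! : ℝ) ≠ 0 := by positivity
  have n10 : ((a+b+3+m)! : ℝ) ≠ 0 := by positivity
  have n11 : ((b+u+2+m)! : ℝ) ≠ 0 := by positivity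
  have n12 : ((b+2+m)! : ℝ) ≠ 0 := by positivity
  have n13 : ((u+1+m)! : ℝ) ≠ 0 := by positivity
  field_simp

noncomputable def W0 (a b : ℕ) : ℝ :=
  (((a:ℝ)+1)*((a:ℝ)+2*(b:ℝ)+6) + ((b:ℝ)+1)*(2*(a:ℝ)+3*(b:ℝ)+10)
    + ((a:ℝ)+(b:ℝ)+2)*((a:ℝ)+(b:ℝ)+1))/2

noncomputable def W1 (a b : ℕ) : ℝ := 2*(a:ℝ)+(b:ℝ)+5

/-- Evaluation of the full term at `ℓ = a+b+1+s`. -/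
lemma perS (a b s u : ℕ) (h : a + b + 3 = s + u) (y : ℝ) :
    (-1 : ℝ) ^ (a+b+1+s) *
      (poch ((b:ℝ)+3) u * poch (-(a:ℝ)-(b:ℝ)-3) u /
        (((u+1)! : ℝ) * (u ! : ℝ) * (((a+b+1+s)! : ℝ)) * ((u+1)! : ℝ))) *
      (∑ m ∈ range (a+b+1+s+1),
        poch (-((a+b+1+s : ℕ) : ℝ)) m * poch ((a:ℝ)+(b:ℝ)+5) m * poch ((a:ℝ)+(b:ℝ)+4) m *
          poch ((b:ℝ)+(u:ℝ)+3) m /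
          (poch ((b:ℝ)+3) m * poch ((u:ℝ)+2) m * poch ((u:ℝ)+2) m * (m ! : ℝ))) *
      y ^ (a+b+1+s+1)
    = (-1 : ℝ) ^ u * (W0 a b + W1 a b * s) / ((s ! : ℝ) * (u ! : ℝ) * ((a+b+4)! : ℝ)) *
      y ^ (a+b+1+s+1) := by
  have e1 : (a:ℝ)+(b:ℝ)+5 = ((a+b+4 : ℕ) : ℝ) + 1 := by push_cast; ring
  have e2 : (a:ℝ)+(b:ℝ)+4 = ((a+b+3 : ℕ) : ℝ) + 1 := by push_cast; ring
  have e3 : (b:ℝ)+(u:ℝ)+3 = ((b+u+2 : ℕ) : ℝ) + 1 := by push_cast; ring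
  have e4 : (b:ℝ)+3 = ((b+2 : ℕ) : ℝ) + 1 := by push_cast; ring
  have e5 : (u:ℝ)+2 = ((u+1 : ℕ) : ℝ) + 1 := by push_cast; ring
  set K : ℝ := ((b+2)! * ((u+1)! * (u+1)!) / ((a+b+4)! * ((a+b+3)! * (b+u+2)!))) with hK
  have hin : (∑ m ∈ range (a+b+1+s+1),
        poch (-((a+b+1+s : ℕ) : ℝ)) m * poch ((a:ℝ)+(b:ℝ)+5) m * poch ((a:ℝ)+(b:ℝ)+4) m *
          poch ((b:ℝ)+(u:ℝ)+3) m /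
          (poch ((b:ℝ)+3) m * poch ((u:ℝ)+2) m * poch ((u:ℝ)+2) m * (m ! : ℝ)))
      = K * ((-1 : ℝ) ^ (a+b+1+s) * ((a+b+1+s)! : ℝ) *
          (((a+1 : ℕ) : ℝ) * ((b:ℝ)+3) + ((a+1 : ℕ) : ℝ) * (((a+1 : ℕ) : ℝ) - 1) / 2
            + (((s : ℕ) : ℝ) * ((u:ℝ)+2) + (s : ℝ) * ((s : ℝ) - 1) / 2)
            + (((b+1 : ℕ) : ℝ) * ((u:ℝ)+2) + ((b+1 : ℕ) : ℝ) * (((b+1 : ℕ) : ℝ) - 1) / 2)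
            + ((a+b+1+s : ℕ) : ℝ) * (((a+b+1+s : ℕ) : ℝ) + 1) / 2)) := by
    have step1 : ∀ m ∈ range (a+b+1+s+1),
        poch (-((a+b+1+s : ℕ) : ℝ)) m * poch ((a:ℝ)+(b:ℝ)+5) m * poch ((a:ℝ)+(b:ℝ)+4) m *
          poch ((b:ℝ)+(u:ℝ)+3) m /
          (poch ((b:ℝ)+3) m * poch ((u:ℝ)+2) m * poch ((u:ℝ)+2) m * (m ! : ℝ))
        = K * ((-1 : ℝ) ^ m * (((a+b+1+s).choose m : ℕ) : ℝ) *
            (poch ((m : ℝ) + ((b:ℝ)+3)) (a+1) * poch ((m : ℝ) + ((u:ℝ)+2)) s *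
              poch ((m : ℝ) + ((u:ℝ)+2)) (b+1))) := by
      intro m hm
      have hm' : m ≤ a+b+1+s := Nat.lt_succ_iff.mp (Finset.mem_range.mp hm)
      conv_lhs => rw [e1, e2, e3, e4, e5]
      rw [termEq a b s u m (a+b+1+s-m) h (by omega), ← hK]
      ring
    rw [Finset.sum_congr rfl step1, ← Finset.mul_sum]
    congr 1
    exact innerEval (a+b+1+s) (a+1) s (b+1) ((b:ℝ)+3) ((u:ℝ)+2) ((u:ℝ)+2) (by omega)
  rw [hin]
  -- outer poch rewrites
  have o1 : poch ((b:ℝ)+3) u = ((b+2+u)! : ℝ) / ((b+2)! : ℝ) := by rw [e4, poch_nat]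
  have o2 : poch (-(a:ℝ)-(b:ℝ)-3) u = (-1:ℝ)^u * ((a+b+3)! : ℝ) / ((s)! : ℝ) := by
    have e6 : -(a:ℝ)-(b:ℝ)-3 = -((a+b+3 : ℕ) : ℝ) := by push_cast; ring
    rw [e6, poch_neg (show u ≤ a+b+3 by omega)]
    have : a+b+3-u = s := by omega
    rw [this]
  rw [o1, o2]
  have c3 : ((b+2+u)! : ℝ) = ((b+u+2)! : ℝ) := by
    have : b+2+u = b+u+2 := by omega
    rw [this]
  rw [c3, hK]
  -- the quadratic coefficient identity
  have hu : (u : ℝ) = (a:ℝ)+(b:ℝ)+3-(s:ℝ) := by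
    have := congrArg (Nat.cast : ℕ → ℝ) h
    push_cast at this
    linarith
  have hE : (((a+1 : ℕ) : ℝ) * ((b:ℝ)+3) + ((a+1 : ℕ) : ℝ) * (((a+1 : ℕ) : ℝ) - 1) / 2
            + (((s : ℕ) : ℝ) * ((u:ℝ)+2) + (s : ℝ) * ((s : ℝ) - 1) / 2)
            + (((b+1 : ℕ) : ℝ) * ((u:ℝ)+2) + ((b+1 : ℕ) : ℝ) * (((b+1 : ℕ) : ℝ) - 1) / 2)
            + ((a+b+1+s : ℕ) : ℝ) * (((a+b+1+s : ℕ) : ℝ) + 1) / 2)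
      = W0 a b + W1 a b * s := by
    rw [W0, W1]
    push_cast
    rw [hu]
    ring
  rw [hE]
  have n1 : ((a+b+1+s)! : ℝ) ≠ 0 := by positivity
  have n2 : ((a+b+4)! : ℝ) ≠ 0 := by positivity
  have n3 : ((a+b+3)! : ℝ) ≠ 0 := by positivity
  have n4 : ((b+u+2)! : ℝ) ≠ 0 := by positivity
  have n5 : ((b+2)! : ℝ) ≠ 0 := by positivity
  have n6 : ((u+1)! : ℝ) ≠ 0 := by positivity
  have n7 : (s ! : ℝ) ≠ 0 := by positivity
  have n8 : (u ! : ℝ) ≠ 0 := by positivity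
  rcases Nat.even_or_odd (a+b+1+s) with hpar | hpar
  · rw [hpar.neg_one_pow]
    field_simp
  · rw [hpar.neg_one_pow]
    field_simp

/-- Closed form of `cCoef1` at the top index. -/
lemma cCoef1_eval (a b : ℕ) (x : ℝ) :
    cCoef1 (a : ℝ) (b : ℝ) (2*a+2*b+6) x
      = -(((a:ℝ)+(b:ℝ)+2)^2*((a:ℝ)+(b:ℝ)+3)*((a:ℝ)+(b:ℝ)+4) /
          (((a:ℝ)+1)*((b:ℝ)+1)*((2*a+2*b+6 : ℕ) : ℝ))) * (x^2-1) *
        (((x+1)/2)^(a+b+2) * ((x-1)/2)^(a+b+2) *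
          (W0 a b * ((x-1)/2) + ((a:ℝ)+(b:ℝ)+3) * W1 a b * ((x+1)/2)) * 4^(a+b+2) /
          (((a+b+3)! : ℝ) * ((a+b+4)! : ℝ))) := by
  rw [cCoef1]
  have hb : 2*a+2*b+6-1 = 2*a+2*b+5 := by omega
  rw [hb]
  set y : ℝ := (x+1)/2 with hy
  -- split the sum
  have hsplit : range (2*a+2*b+5) = Finset.Ico 0 (a+b+1) ∪ Finset.Ico (a+b+1) (2*a+2*b+5) := by
    rw [Finset.range_eq_Ico]
    exact (Finset.Ico_union_Ico_eq_Ico (Nat.zero_le (a+b+1))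
      (show a+b+1 ≤ 2*a+2*b+5 by omega)).symm
  rw [hsplit, Finset.sum_union (by
    apply Finset.Ico_disjoint_Ico_consecutive)]
  have hzero : ∑ ℓ ∈ Finset.Ico 0 (a+b+1),
      (-1 : ℝ) ^ ℓ *
      (poch ((b:ℝ) + 3) (2*a+2*b+6 - ℓ - 2) * poch (-(a:ℝ) - (b:ℝ) - 3) (2*a+2*b+6 - ℓ - 2) /
        ((2*a+2*b+6 - ℓ - 1)! * ((2*a+2*b+6 - ℓ - 2)! : ℝ) * (ℓ ! : ℝ) *
          ((2*a+2*b+6 - ℓ - 1)! : ℝ))) *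
      (∑ m ∈ Finset.range (ℓ + 1),
        poch (-(ℓ : ℝ)) m * poch ((a:ℝ) + (b:ℝ) + 5) m * poch ((a:ℝ) + (b:ℝ) + 4) m *
          poch ((b:ℝ) + ((2*a+2*b+6 : ℕ) : ℝ) - (ℓ : ℝ) + 1) m /
          (poch ((b:ℝ) + 3) m * poch (((2*a+2*b+6 : ℕ) : ℝ) - (ℓ : ℝ)) m *
            poch (((2*a+2*b+6 : ℕ) : ℝ) - (ℓ : ℝ)) m * (m ! : ℝ))) *
      y ^ (ℓ + 1) = 0 := by
    apply Finset.sum_eq_zero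
    intro ℓ hℓ
    have hℓ' : ℓ < a+b+1 := (Finset.mem_Ico.mp hℓ).2
    have e6 : -(a:ℝ)-(b:ℝ)-3 = -((a+b+3 : ℕ) : ℝ) := by push_cast; ring
    rw [e6, poch_neg_zero (show a+b+3 < 2*a+2*b+6-ℓ-2 by omega)]
    simp
  rw [hzero, zero_add]
  rw [Finset.sum_Ico_eq_sum_range]
  have hcnt : 2*a+2*b+5 - (a+b+1) = a+b+4 := by omega
  rw [hcnt]
  have hstep : ∀ s ∈ range (a+b+4),
      (-1 : ℝ) ^ (a+b+1+s) *
      (poch ((b:ℝ) + 3) (2*a+2*b+6 - (a+b+1+s) - 2) *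
        poch (-(a:ℝ) - (b:ℝ) - 3) (2*a+2*b+6 - (a+b+1+s) - 2) /
        (((2*a+2*b+6 - (a+b+1+s) - 1)! : ℝ) * ((2*a+2*b+6 - (a+b+1+s) - 2)! : ℝ) *
          (((a+b+1+s)!) : ℝ) * ((2*a+2*b+6 - (a+b+1+s) - 1)! : ℝ))) *
      (∑ m ∈ Finset.range ((a+b+1+s) + 1),
        poch (-((a+b+1+s : ℕ) : ℝ)) m * poch ((a:ℝ) + (b:ℝ) + 5) m * poch ((a:ℝ) + (b:ℝ) + 4) m *
          poch ((b:ℝ) + ((2*a+2*b+6 : ℕ) : ℝ) - ((a+b+1+s : ℕ) : ℝ) + 1) m /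
          (poch ((b:ℝ) + 3) m * poch (((2*a+2*b+6 : ℕ) : ℝ) - ((a+b+1+s : ℕ) : ℝ)) m *
            poch (((2*a+2*b+6 : ℕ) : ℝ) - ((a+b+1+s : ℕ) : ℝ)) m * (m ! : ℝ))) *
      y ^ ((a+b+1+s) + 1)
      = (-1 : ℝ) ^ (a+b+3-s) * (W0 a b + W1 a b * s) /
          ((s ! : ℝ) * (((a+b+3-s)!) : ℝ) * ((a+b+4)! : ℝ)) * y ^ (a+b+1+s+1) := by
    intro s hs
    have hs' : s ≤ a+b+3 := by
      have := Finset.mem_range.mp hs; omega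
    have h1 : 2*a+2*b+6 - (a+b+1+s) - 2 = a+b+3-s := by omega
    have h2 : 2*a+2*b+6 - (a+b+1+s) - 1 = (a+b+3-s)+1 := by omega
    have hcast : ((a+b+3-s : ℕ) : ℝ) = (a:ℝ)+(b:ℝ)+3-(s:ℝ) := by
      push_cast [Nat.cast_sub hs']
      ring
    have h3 : (b:ℝ) + ((2*a+2*b+6 : ℕ) : ℝ) - ((a+b+1+s : ℕ) : ℝ) + 1
        = (b:ℝ) + ((a+b+3-s : ℕ) : ℝ) + 3 := by
      rw [hcast]; push_cast; ring
    have h4 : ((2*a+2*b+6 : ℕ) : ℝ) - ((a+b+1+s : ℕ) : ℝ) = ((a+b+3-s : ℕ) : ℝ) + 2 := by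
      rw [hcast]; push_cast; ring
    rw [h1, h2, h3, h4]
    exact perS a b s (a+b+3-s) (by omega) y
  rw [Finset.sum_congr rfl hstep]
  -- now evaluate the binomial sums
  have hexp : ∀ s : ℕ, a+b+1+s+1 = (a+b+2)+s := by omega
  have hstep2 : ∀ s ∈ range (a+b+4),
      (-1 : ℝ) ^ (a+b+3-s) * (W0 a b + W1 a b * s) /
          ((s ! : ℝ) * (((a+b+3-s)!) : ℝ) * ((a+b+4)! : ℝ)) * y ^ (a+b+1+s+1)
      = (y ^ (a+b+2) / ((a+b+4)! : ℝ)) *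
          (W0 a b * ((-1 : ℝ) ^ (a+b+3-s) * y ^ s / ((s ! : ℝ) * ((a+b+3-s)! : ℝ)))
            + W1 a b * ((-1 : ℝ) ^ (a+b+3-s) * s * y ^ s / ((s ! : ℝ) * ((a+b+3-s)! : ℝ)))) := by
    intro s hs
    rw [hexp s, pow_add]
    have n1 : (s ! : ℝ) ≠ 0 := by positivity
    have n2 : (((a+b+3-s)!) : ℝ) ≠ 0 := by positivity
    have n3 : (((a+b+4)!) : ℝ) ≠ 0 := by positivity
    field_simp
  rw [Finset.sum_congr rfl hstep2, ← Finset.mul_sum]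
  have hb1 := binom1 (a+b+3) y
  rw [show a+b+3+1 = a+b+4 by omega] at hb1
  have hb2 := binom2 (a+b+2) y
  rw [show a+b+2+2 = a+b+4 by omega] at hb2
  simp only [show a+b+2+1 = a+b+3 by omega] at hb2
  have hsplitWs : ∑ s ∈ range (a+b+4),
      (W0 a b * ((-1 : ℝ) ^ (a+b+3-s) * y ^ s / ((s ! : ℝ) * ((a+b+3-s)! : ℝ)))
        + W1 a b * ((-1 : ℝ) ^ (a+b+3-s) * s * y ^ s / ((s ! : ℝ) * ((a+b+3-s)! : ℝ))))
      = W0 a b * ((y-1)^(a+b+3) / ((a+b+3)! : ℝ))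
        + W1 a b * (y * (y-1)^(a+b+2) / ((a+b+2)! : ℝ)) := by
    rw [Finset.sum_add_distrib, ← Finset.mul_sum, ← Finset.mul_sum, hb1, hb2]
  rw [hsplitWs]
  -- final algebra
  have hz : y - 1 = (x-1)/2 := by rw [hy]; ring
  rw [hz]
  have hp4 : (2:ℝ)^(2*a+2*b+6-2) = 4^(a+b+2) := by
    rw [show 2*a+2*b+6-2 = 2*(a+b+2) by omega, pow_mul]
    norm_num
  rw [hp4]
  have hf3 : ((a+b+3)! : ℝ) = ((a:ℝ)+(b:ℝ)+3) * ((a+b+2)! : ℝ) := by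
    rw [show a+b+3 = (a+b+2)+1 by omega, Nat.factorial_succ]
    push_cast; ring
  rw [hf3]
  have n2 : ((a+b+2)! : ℝ) ≠ 0 := by positivity
  have n3 : ((a+b+4)! : ℝ) ≠ 0 := by positivity
  have n4 : ((a:ℝ)+(b:ℝ)+3) ≠ 0 := by positivity
  have n5 : ((2*a+2*b+6 : ℕ) : ℝ) ≠ 0 := by positivity
  have n6 : ((a:ℝ)+1) ≠ 0 := by positivity
  have n7 : ((b:ℝ)+1) ≠ 0 := by positivity
  field_simp
  ring

/-- Symmetry: `cCoef2 α β i x = cCoef1 β α i (-x)` for even `i`. -/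
lemma c2_symm (a b k : ℕ) (x : ℝ) :
    cCoef2 (a : ℝ) (b : ℝ) (2*k) x = cCoef1 (b : ℝ) (a : ℝ) (2*k) (-x) := by
  rw [cCoef1, cCoef2]
  have e1 : -(b:ℝ)-(a:ℝ)-3 = -(a:ℝ)-(b:ℝ)-3 := by ring
  have e2 : (b:ℝ)+(a:ℝ)+5 = (a:ℝ)+(b:ℝ)+5 := by ring
  have e3 : (b:ℝ)+(a:ℝ)+4 = (a:ℝ)+(b:ℝ)+4 := by ring
  rw [e1, e2, e3]
  have hterm : ∀ ℓ ∈ range (2*k-1),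
      (-1 : ℝ) ^ ℓ *
      (poch ((a:ℝ) + 3) (2*k - ℓ - 2) * poch (-(a:ℝ) - (b:ℝ) - 3) (2*k - ℓ - 2) /
        (((2*k - ℓ - 1)! : ℝ) * ((2*k - ℓ - 2)! : ℝ) * (ℓ ! : ℝ) * ((2*k - ℓ - 1)! : ℝ))) *
      (∑ m ∈ Finset.range (ℓ + 1),
        poch (-(ℓ : ℝ)) m * poch ((a:ℝ) + (b:ℝ) + 5) m * poch ((a:ℝ) + (b:ℝ) + 4) m *
          poch ((a:ℝ) + ((2*k : ℕ) : ℝ) - (ℓ : ℝ) + 1) m /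
          (poch ((a:ℝ) + 3) m * poch (((2*k : ℕ) : ℝ) - (ℓ : ℝ)) m *
            poch (((2*k : ℕ) : ℝ) - (ℓ : ℝ)) m * (m ! : ℝ))) *
      ((-x + 1) / 2) ^ (ℓ + 1)
      = -((poch ((a:ℝ) + 3) (2*k - ℓ - 2) * poch (-(a:ℝ) - (b:ℝ) - 3) (2*k - ℓ - 2) /
        (((2*k - ℓ - 1)! : ℝ) * ((2*k - ℓ - 2)! : ℝ) * (ℓ ! : ℝ) * ((2*k - ℓ - 1)! : ℝ))) *
      (∑ m ∈ Finset.range (ℓ + 1),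
        poch (-(ℓ : ℝ)) m * poch ((a:ℝ) + (b:ℝ) + 5) m * poch ((a:ℝ) + (b:ℝ) + 4) m *
          poch ((a:ℝ) + ((2*k : ℕ) : ℝ) - (ℓ : ℝ) + 1) m /
          (poch ((a:ℝ) + 3) m * poch (((2*k : ℕ) : ℝ) - (ℓ : ℝ)) m *
            poch (((2*k : ℕ) : ℝ) - (ℓ : ℝ)) m * (m ! : ℝ))) *
      ((x - 1) / 2) ^ (ℓ + 1)) := by
    intro ℓ hℓ
    have hpow : ((-x + 1) / 2) ^ (ℓ + 1) = (-1 : ℝ) ^ (ℓ+1) * ((x - 1) / 2) ^ (ℓ + 1) := by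
      rw [show (-x + 1)/2 = -((x-1)/2) by ring, neg_pow]
    rw [hpow]
    rcases Nat.even_or_odd ℓ with hpar | hpar
    · rw [hpar.neg_one_pow, (by simpa using hpar.add_one : Odd (ℓ+1)).neg_one_pow]
      ring
    · rw [hpar.neg_one_pow, (hpar.add_one : Even (ℓ+1)).neg_one_pow]
      ring
  rw [Finset.sum_congr rfl hterm]
  rw [Finset.sum_neg_distrib]
  have hneg2 : (-2 : ℝ)^(2*k-2) = 2^(2*k-2) := Even.neg_pow ⟨k-1, by omega⟩ 2
  rw [hneg2]
  ring


set_option maxHeartbeats 2000000 in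
/-- for nonnegative integers `α`, `β`,
`c_{2α+2β+6}(α,β,x) = −[(α+β+2)/((α+1)(β+1))] (x²−1)^{α+β+3} / ((α+β+1)! (α+β+3)!)`. -/
theorem cCoef_top (α β : ℕ) (x : ℝ) :
    cCoef (α : ℝ) (β : ℝ) (2 * α + 2 * β + 6) x =
      -(((α : ℝ) + β + 2) / (((α : ℝ) + 1) * ((β : ℝ) + 1))) *
        (x ^ 2 - 1) ^ (α + β + 3) /
        (Nat.factorial (α + β + 1) * Nat.factorial (α + β + 3)) := by
  unfold cCoef
  have h2 : cCoef2 (α:ℝ) (β:ℝ) (2*α+2*β+6) x = cCoef1 (β:ℝ) (α:ℝ) (2*α+2*β+6) (-x) := by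
    rw [show 2*α+2*β+6 = 2*(α+β+3) by ring]
    exact c2_symm α β (α+β+3) x
  rw [h2]
  have hB := cCoef1_eval β α (-x)
  rw [show 2*β+2*α+6 = 2*α+2*β+6 by ring, show β+α+2 = α+β+2 by omega,
    show β+α+3 = α+β+3 by omega, show β+α+4 = α+β+4 by omega] at hB
  rw [cCoef1_eval α β x, hB]
  have p1 : ((x+1)/2)^(α+β+2) * ((x-1)/2)^(α+β+2) = ((x^2-1)/4)^(α+β+2) := by
    rw [← mul_pow]; congr 1; ring
  have p2 : ((-x+1)/2)^(α+β+2) * ((-x-1)/2)^(α+β+2) = ((x^2-1)/4)^(α+β+2) := by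
    rw [← mul_pow]; congr 1; ring
  rw [p1, p2, div_pow]
  have p4 : (x^2-1)^(α+β+3) = (x^2-1)^(α+β+2) * (x^2-1) := by
    rw [show α+β+3 = (α+β+2)+1 by omega, pow_succ]
  rw [p4]
  have f4 : ((α+β+4)! : ℝ) = ((α:ℝ)+(β:ℝ)+4)*((α+β+3)! : ℝ) := by
    rw [show α+β+4 = (α+β+3)+1 by omega, Nat.factorial_succ]; push_cast; ring
  have f3 : ((α+β+3)! : ℝ) = ((α:ℝ)+(β:ℝ)+3)*((α:ℝ)+(β:ℝ)+2)*((α+β+1)! : ℝ) := by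
    rw [show α+β+3 = (α+β+2)+1 by omega, Nat.factorial_succ,
      show α+β+2 = (α+β+1)+1 by omega, Nat.factorial_succ]
    push_cast; ring
  rw [f4, f3]
  simp only [W0, W1]
  have n1 : ((α+β+1)! : ℝ) ≠ 0 := by positivity
  have n2 : (4:ℝ)^(α+β+2) ≠ 0 := by positivity
  have n3 : ((α:ℝ)+1) ≠ 0 := by positivity
  have n4 : ((β:ℝ)+1) ≠ 0 := by positivity
  have n5 : ((α:ℝ)+(β:ℝ)+2) ≠ 0 := by positivity
  have n6 : ((α:ℝ)+(β:ℝ)+3) ≠ 0 := by positivity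
  have n7 : ((α:ℝ)+(β:ℝ)+4) ≠ 0 := by positivity
  have n8 : ((2*α+2*β+6 : ℕ) : ℝ) ≠ 0 := by positivity
  push_cast
  generalize ((x:ℝ)^2-1)^(α+β+2) = Q
  generalize hF : ((α+β+1)! : ℝ) = F
  generalize hC : (4:ℝ)^(α+β+2) = C4
  generalize hA : (α:ℝ) = A
  generalize hB2 : (β:ℝ) = B
  rw [hF] at n1
  rw [hC] at n2
  rw [hA] at n3 n5 n6 n7
  rw [hB2] at n4 n5 n6 n7
  push_cast at n8
  rw [hA, hB2] at n8
  generalize hD : 2*A+2*B+6 = D at n8 ⊢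
  field_simp
  subst hD
  ring
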